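/- arXiv:2401.05690 — 2 statements merged into one kernel-verified Lean document; each statement's English description precedes it below -/
import Mathlib

section
/- For the ECA with subarray 1 having LM−1 antennas at positions mNd₀ (m ∈ {−LM/2+1,...,LM/2−1}), subarray 2 having LN−1 antennas at positions nMd₀ (n ∈ {−LN/2+1,...,LN/2−1}), and M, N coprime, the set of shared antenna positions of the two subarrays is exactly {iMNd₀ : i ∈ {−L/2+1, ..., L/2−1}}, so the subarrays share exactly L−1 antennas. -/
/-- For the ECA with subarray 1 at positions `mNd₀`,
`m ∈ {−LM/2+1,…,LM/2−1}`, and subarray 2 at positions `nMd₀`,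
`n ∈ {−LN/2+1,…,LN/2−1}`, with `M, N` coprime and `L = 2K` even, the set of shared
positions is exactly `{iMNd₀ : i ∈ {−L/2+1,…,L/2−1}}`, and the subarrays share exactly
`L − 1` antennas. -/
theorem eca_shared_antennas
    (M N K : ℕ) (hM : 1 ≤ M) (hN : 1 ≤ N) (hK : 1 ≤ K) (hco : Nat.Coprime M N)
    (d₀ : ℝ) (hd₀ : 0 < d₀) (L : ℕ) (hL : L = 2 * K)
    (S₁ S₂ : Set ℝ)
    (hS₁ : S₁ = {x : ℝ | ∃ m : ℤ, -((K : ℤ) * M) + 1 ≤ m ∧ m ≤ (K : ℤ) * M - 1 ∧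
        x = (m : ℝ) * N * d₀})
    (hS₂ : S₂ = {x : ℝ | ∃ n : ℤ, -((K : ℤ) * N) + 1 ≤ n ∧ n ≤ (K : ℤ) * N - 1 ∧
        x = (n : ℝ) * M * d₀}) :
    S₁ ∩ S₂ = {x : ℝ | ∃ i : ℤ, -(K : ℤ) + 1 ≤ i ∧ i ≤ (K : ℤ) - 1 ∧
        x = (i : ℝ) * M * N * d₀} ∧
    (S₁ ∩ S₂).ncard = L - 1 := by
  have hMpos : (0:ℤ) < M := by exact_mod_cast hM
  have hNpos : (0:ℤ) < N := by exact_mod_cast hN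
  have hKpos : (0:ℤ) < K := by exact_mod_cast hK
  have hset : S₁ ∩ S₂ = {x : ℝ | ∃ i : ℤ, -(K : ℤ) + 1 ≤ i ∧ i ≤ (K : ℤ) - 1 ∧
      x = (i : ℝ) * M * N * d₀} := by
    subst hS₁ hS₂
    ext x
    simp only [Set.mem_inter_iff, Set.mem_setOf_eq]
    constructor
    · rintro ⟨⟨m, hm1, hm2, rfl⟩, ⟨n, hn1, hn2, hx⟩⟩
      have heq : (m : ℤ) * N = n * M := by
        have h1 : ((m : ℤ) * N : ℝ) * d₀ = ((n : ℤ) * M : ℝ) * d₀ := by push_cast; push_cast at hx; linarith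
        have h2 : ((m : ℤ) * N : ℝ) = ((n : ℤ) * M : ℝ) := mul_right_cancel₀ (ne_of_gt hd₀) h1
        exact_mod_cast h2
      have hdvd : (M : ℤ) ∣ m := by
        have hd : (M : ℤ) ∣ m * N := ⟨n, by linarith⟩
        have hcop : IsCoprime (M:ℤ) (N:ℤ) := Int.isCoprime_iff_gcd_eq_one.mpr (by exact_mod_cast hco)
        exact hcop.dvd_of_dvd_mul_right hd
      obtain ⟨i, rfl⟩ := hdvd
      exact ⟨i, by nlinarith, by nlinarith, by push_cast; ring⟩
    · rintro ⟨i, hi1, hi2, rfl⟩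
      exact ⟨⟨i * M, by nlinarith, by nlinarith, by push_cast; ring⟩,
             ⟨i * N, by nlinarith, by nlinarith, by push_cast; ring⟩⟩
  refine ⟨hset, ?_⟩
  rw [hset]
  have himg : {x : ℝ | ∃ i : ℤ, -(K : ℤ) + 1 ≤ i ∧ i ≤ (K : ℤ) - 1 ∧
      x = (i : ℝ) * M * N * d₀} =
      (fun i : ℤ => (i : ℝ) * M * N * d₀) '' (Set.Icc (-(K:ℤ)+1) ((K:ℤ)-1)) := by
    ext x
    simp only [Set.mem_image, Set.mem_Icc, Set.mem_setOf_eq]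
    constructor
    · rintro ⟨i, h1, h2, rfl⟩; exact ⟨i, ⟨h1, h2⟩, rfl⟩
    · rintro ⟨i, ⟨h1, h2⟩, rfl⟩; exact ⟨i, h1, h2, rfl⟩
  rw [himg]
  have hinj : Set.InjOn (fun i : ℤ => (i : ℝ) * M * N * d₀) (Set.Icc (-(K:ℤ)+1) ((K:ℤ)-1)) := by
    intro a _ b _ hab
    simp only at hab
    have hne : ((M:ℝ) * N * d₀) ≠ 0 := by positivity
    have : (a:ℝ) * ((M:ℝ)*N*d₀) = (b:ℝ) * ((M:ℝ)*N*d₀) := by ring_nf; ring_nf at hab; linarith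
    have := mul_right_cancel₀ hne this
    exact_mod_cast this
  rw [Set.ncard_image_of_injOn hinj]
  rw [Set.ncard_eq_toFinset_card', Set.toFinset_Icc, Int.card_Icc]
  simp only [hL]
  omega
end

section
/- On the user-ring (Φ = 0), the ECA beam pattern satisfies Q_ECA · f_ECA(Δ) = |Ξ_{LM−1}(NΔ) + Ξ_{LN−1}(MΔ) − Ξ_{L−1}(MNΔ)|, where Ξ_α(x) = sin(απx/2)/sin(πx/2); i.e., the inner product of the ECA steering vectors equals the sum of the two subarray Dirichlet kernels minus the Dirichlet kernel of the shared antennas. -/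
open Real Complex Finset

/-- Symmetric Dirichlet-kernel sum: for integer indices `m ∈ [-n, n]`,
`∑ exp(iπcm) = sin((2n+1)πc/2) / sin(πc/2)` whenever the denominator is nonzero. -/
lemma dirichlet_nat (c : ℝ) (h : Real.sin (π * c / 2) ≠ 0) : ∀ n : ℕ,
    ∑ m ∈ Finset.Icc (-(n : ℤ)) (n : ℤ), Complex.exp (Complex.I * π * c * m)
      = ((Real.sin ((2 * n + 1) * (π * c / 2)) / Real.sin (π * c / 2) : ℝ) : ℂ) := by
  have hC : Complex.sin ((π : ℂ) * c / 2) ≠ 0 := by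
    rw [show ((π : ℂ) * c / 2) = ((π * c / 2 : ℝ) : ℂ) by push_cast; ring,
      ← Complex.ofReal_sin]
    exact_mod_cast h
  intro n
  induction n with
  | zero =>
      norm_num [div_self h]
  | succ n ih =>
      have hset : Finset.Icc (-((n : ℤ) + 1)) ((n : ℤ) + 1)
          = insert (-((n : ℤ) + 1)) (insert ((n : ℤ) + 1)
              (Finset.Icc (-(n : ℤ)) (n : ℤ))) := by
        ext x
        simp only [Finset.mem_Icc, Finset.mem_insert]
        omega
      push_cast
      push_cast at ih
      rw [hset, Finset.sum_insert (by simp only [Finset.mem_insert, Finset.mem_Icc]; omega),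
        Finset.sum_insert (by simp only [Finset.mem_Icc]; omega), ih]
      have e1 : Complex.I * π * c * (-((n : ℤ) + 1) : ℤ)
          = (-((π : ℂ) * c * ((n : ℂ) + 1))) * Complex.I := by
        push_cast; ring
      have e2 : Complex.I * π * c * (((n : ℤ) + 1) : ℤ)
          = ((π : ℂ) * c * ((n : ℂ) + 1)) * Complex.I := by
        push_cast; ring
      rw [e1, e2, Complex.exp_mul_I, Complex.exp_mul_I, Complex.cos_neg, Complex.sin_neg]
      have harg1 : (2 * (n : ℂ) + 1) * ((π : ℂ) * c / 2)
          = (π : ℂ) * c * ((n : ℂ) + 1) - (π : ℂ) * c / 2 := by ring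
      have harg2 : (2 * ((n : ℂ) + 1) + 1) * ((π : ℂ) * c / 2)
          = (π : ℂ) * c * ((n : ℂ) + 1) + (π : ℂ) * c / 2 := by ring
      rw [harg1, harg2, Complex.sin_add, Complex.sin_sub]
      field_simp
      ring

/-- On the user-ring (`Φ = 0`), the ECA beam pattern (inner product of ECA
steering vectors, i.e. subarray-1 sum plus subarray-2 sum minus the double-counted
shared-antenna sum) has magnitude
`|Ξ_{LM−1}(NΔ) + Ξ_{LN−1}(MΔ) − Ξ_{L−1}(MNΔ)|`, where `Ξ_α(x) = sin(απx/2)/sin(πx/2)`,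
whenever the three denominators are nonzero. Here `L = 2K` and `Δ = sinθ − sinθ₀`. -/
theorem eca_user_ring_beam_pattern
    (M N K : ℕ) (hM : 1 ≤ M) (hN : 1 ≤ N) (hK : 1 ≤ K) (hco : Nat.Coprime M N)
    (L : ℕ) (hL : L = 2 * K)
    (θ θ₀ Δ : ℝ) (hΔ : Δ = Real.sin θ - Real.sin θ₀)
    (hden₁ : Real.sin (π * ((N : ℝ) * Δ) / 2) ≠ 0)
    (hden₂ : Real.sin (π * ((M : ℝ) * Δ) / 2) ≠ 0)
    (hden₃ : Real.sin (π * ((M : ℝ) * N * Δ) / 2) ≠ 0) :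
    ‖(∑ m ∈ Finset.Icc (-((K : ℤ) * M) + 1) ((K : ℤ) * M - 1),
          Complex.exp (Complex.I * π * (N : ℂ) * (Δ : ℂ) * (m : ℂ))) +
      (∑ n ∈ Finset.Icc (-((K : ℤ) * N) + 1) ((K : ℤ) * N - 1),
          Complex.exp (Complex.I * π * (M : ℂ) * (Δ : ℂ) * (n : ℂ))) -
      (∑ i ∈ Finset.Icc (-(K : ℤ) + 1) ((K : ℤ) - 1),
          Complex.exp (Complex.I * π * (M : ℂ) * (N : ℂ) * (Δ : ℂ) * (i : ℂ)))‖ =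
    |Real.sin (((L : ℝ) * M - 1) * π * ((N : ℝ) * Δ) / 2) /
        Real.sin (π * ((N : ℝ) * Δ) / 2) +
      Real.sin (((L : ℝ) * N - 1) * π * ((M : ℝ) * Δ) / 2) /
        Real.sin (π * ((M : ℝ) * Δ) / 2) -
      Real.sin (((L : ℝ) - 1) * π * ((M : ℝ) * N * Δ) / 2) /
        Real.sin (π * ((M : ℝ) * N * Δ) / 2)| := by
  have hKM : 1 ≤ K * M := le_trans (by norm_num) (Nat.mul_le_mul hK hM)
  have hKN : 1 ≤ K * N := le_trans (by norm_num) (Nat.mul_le_mul hK hN)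
  have c1 : ((K * M - 1 : ℕ) : ℤ) = (K : ℤ) * M - 1 := by omega
  have c2 : ((K * N - 1 : ℕ) : ℤ) = (K : ℤ) * N - 1 := by omega
  have c3 : ((K - 1 : ℕ) : ℤ) = (K : ℤ) - 1 := by omega
  have s1 : (∑ m ∈ Finset.Icc (-((K : ℤ) * M) + 1) ((K : ℤ) * M - 1),
        Complex.exp (Complex.I * π * (N : ℂ) * (Δ : ℂ) * (m : ℂ)))
      = ((Real.sin ((2 * (K * M - 1 : ℕ) + 1) * (π * ((N : ℝ) * Δ) / 2)) /
          Real.sin (π * ((N : ℝ) * Δ) / 2) : ℝ) : ℂ) := by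
    rw [← dirichlet_nat ((N : ℝ) * Δ) hden₁ (K * M - 1)]
    apply Finset.sum_congr
    · rw [c1]; congr 1; ring
    · intro m _; congr 1; push_cast; ring
  have s2 : (∑ n ∈ Finset.Icc (-((K : ℤ) * N) + 1) ((K : ℤ) * N - 1),
        Complex.exp (Complex.I * π * (M : ℂ) * (Δ : ℂ) * (n : ℂ)))
      = ((Real.sin ((2 * (K * N - 1 : ℕ) + 1) * (π * ((M : ℝ) * Δ) / 2)) /
          Real.sin (π * ((M : ℝ) * Δ) / 2) : ℝ) : ℂ) := by
    rw [← dirichlet_nat ((M : ℝ) * Δ) hden₂ (K * N - 1)]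
    apply Finset.sum_congr
    · rw [c2]; congr 1; ring
    · intro m _; congr 1; push_cast; ring
  have s3 : (∑ i ∈ Finset.Icc (-(K : ℤ) + 1) ((K : ℤ) - 1),
        Complex.exp (Complex.I * π * (M : ℂ) * (N : ℂ) * (Δ : ℂ) * (i : ℂ)))
      = ((Real.sin ((2 * (K - 1 : ℕ) + 1) * (π * ((M : ℝ) * N * Δ) / 2)) /
          Real.sin (π * ((M : ℝ) * N * Δ) / 2) : ℝ) : ℂ) := by
    rw [← dirichlet_nat ((M : ℝ) * N * Δ) hden₃ (K - 1)]
    apply Finset.sum_congr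
    · rw [c3]; congr 1; ring
    · intro m _; congr 1; push_cast; ring
  rw [s1, s2, s3, ← Complex.ofReal_add, ← Complex.ofReal_sub, Complex.norm_real,
    Real.norm_eq_abs]
  congr 2
  · congr 2
    · congr 1
      subst hL
      push_cast [Nat.cast_sub hKM]
      ring
    · congr 1
      subst hL
      push_cast [Nat.cast_sub hKN]
      ring
  · congr 1
    subst hL
    push_cast [Nat.cast_sub hK]
    ring
end
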